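/- Let L ∈ Σ[∂] be monic of order n in normal form with constants C of characteristic zero, and let M be its level. Then the set F_M of constant solutions of the inhomogeneous system GD_{n,M}(L) is a single point {c_M}, and V_M, the constant-solution space of the homogeneous system hGD_{n,M}(L), is the one-dimensional space spanned by (c_M, 1). More generally, for any m not divisible by n, either F_m = ∅ or F_m = {c_m} + V_{m−1} is an affine space over V_{m−1}, and V_m = V_{m−1} ⊕ T_m with dim T_m ≤ 1. -/

import Mathlib

open scoped Classical
noncomputable section

variable {R : Type} [Ring R]

/-- Left multiplication by `a` as an additive endomorphism of `R`. -/
def mulOp (a : R) : AddMonoid.End R := AddMonoidHom.mulLeft a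

/-- The derivation as an additive endomorphism. -/
def derOp (d : R →+ R) : AddMonoid.End R := d

/-- `d` satisfies the Leibniz rule. -/
def IsDeriv (d : R →+ R) : Prop := ∀ a b : R, d (a * b) = d a * b + a * d b

/-- Additive group of differential operators of order at most `n`:
sums of terms `a · ∂^i` with `i ≤ n`. -/
def OpLE (d : R →+ R) (n : ℕ) : AddSubgroup (AddMonoid.End R) :=
  AddSubgroup.closure {P | ∃ (a : R) (i : ℕ), i ≤ n ∧ P = mulOp a * derOp d ^ i}

/-- `L` is a differential operator. -/
def IsOp (d : R →+ R) (L : AddMonoid.End R) : Prop := ∃ n, L ∈ OpLE d n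

/-- `L` is a differential operator of exact order `n`. -/
def HasOrd (d : R →+ R) (L : AddMonoid.End R) (n : ℕ) : Prop :=
  L ∈ OpLE d n ∧ ∀ k, L ∈ OpLE d k → n ≤ k

/-- `L` is a monic differential operator of order `n`. -/
def MonicOrd (d : R →+ R) (L : AddMonoid.End R) (n : ℕ) : Prop :=
  HasOrd d L n ∧ L - derOp d ^ n ∈ OpLE d (n - 1)

/-- The centralizer of `L` in the ring of differential operators. -/
def Cent (d : R →+ R) (L : AddMonoid.End R) : Set (AddMonoid.End R) :=
  {A | IsOp d A ∧ L * A = A * L}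

/-- Polynomials in `L` with constant coefficients. -/
def CPoly (d : R →+ R) (L : AddMonoid.End R) : Set (AddMonoid.End R) :=
  {P | ∃ p : Polynomial R, (∀ k, d (p.coeff k) = 0) ∧
      P = ∑ i ∈ Finset.range (p.natDegree + 1), mulOp (p.coeff i) * L ^ i}

/-- The level of `L`: smallest order of an element of `Z(L) \ C[L]`. -/
def Level (d : R →+ R) (L : AddMonoid.End R) (M : ℕ) : Prop :=
  (∃ Q ∈ Cent d L, Q ∉ CPoly d L ∧ HasOrd d Q M) ∧
  ∀ Q ∈ Cent d L, Q ∉ CPoly d L → ∀ q, HasOrd d Q q → M ≤ q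

/-- The index set `J_{n,m} = {1, ..., m} \\ nℤ`. -/
def Jset (n m : ℕ) : Finset ℕ := (Finset.range (m + 1)).filter (fun j => ¬ (n ∣ j))

/-- The operator `∑_{j ∈ J} c_j · B_j` associated to a coefficient vector `c`. -/
def theta {R : Type} [Ring R] (c : ℕ → R) (B : ℕ → AddMonoid.End R) (J : Finset ℕ) :
    AddMonoid.End R :=
  ∑ j ∈ J, mulOp (c j) * B j

/-- `V_m`: the constant solutions of the homogeneous system `hGD_{n,m}(L)`, i.e. the
constant coefficient vectors `c` supported on `J_{n,m}` such that
`∑_{j ∈ J_{n,m}} c_j B_j` commutes with `L`. -/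
def VmSet {R : Type} [Ring R] (d : R →+ R) (L : AddMonoid.End R)
    (B : ℕ → AddMonoid.End R) (n m : ℕ) : Set (ℕ → R) :=
  {c | (∀ j, d (c j) = 0) ∧ (∀ j ∉ Jset n m, c j = 0) ∧
       theta c B (Jset n m) ∈ Cent d L}

/-- `F_m`: the constant solutions of the inhomogeneous system `GD_{n,m}(L)`, i.e. the
constant coefficient vectors `c` supported on `J_{n,m−1}` such that
`B_m + ∑_{j ∈ J_{n,m−1}} c_j B_j` commutes with `L`. -/
def FmSet {R : Type} [Ring R] (d : R →+ R) (L : AddMonoid.End R)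
    (B : ℕ → AddMonoid.End R) (n m : ℕ) : Set (ℕ → R) :=
  {c | (∀ j, d (c j) = 0) ∧ (∀ j ∉ Jset n (m - 1), c j = 0) ∧
       B m + theta c B (Jset n (m - 1)) ∈ Cent d L}


/-!
Write `OpLT d k` for the operators of order `< k`. Since `L = ∂^n + (order ≤ n - 2)`, an operator
`A = a ∂^m + (order < m)` has `⁅L, A⁆ = n (d a) ∂^(n + m - 1) + (order < n + m - 1)`. Coefficients
of `∂`-expansions are unique (characteristic `0`, and some `x` has `d x ≠ 0`), so if `⁅L, A⁆` has
order `≤ n - 2` then `a` is constant. Peeling off top terms, every `Q ∈ Z(L)` of order `M` is a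
constant combination of the `B_j` with `n ∤ j` and of the powers `L ^ (j / n)` with `n ∣ j`. The
second part lies in `C[L]`, so if `Q ∉ C[L]` the first part is a nonzero element of `V_M`.
Conversely, a nonzero `ξ ∈ V_m` gives `∑ ξ_j B_j ∈ Z(L)`, of order its top index `j`; as `n ∤ j`
while nonzero elements of `C[L]` have order divisible by `n`, it lies outside `C[L]`, so `M ≤ j`.
Hence `V_{M-1} = 0` and some `ξ ∈ V_M` has `ξ_M ≠ 0`. The rest is linear algebra: `V_{m-1}` is the
slice `ξ_m = 0` of `V_m`, and `c ↦ (c, 1)` identifies `F_m` with the slice `ξ_m = 1`.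
-/

open Finset

section Operators

variable {F : Type} [Field F] {d : F →+ F}

@[simp] lemma mulOp_apply (a x : F) : mulOp a x = a * x := rfl

lemma toAddMonoidEnd_eq_mulOp (a : F) : Module.toAddMonoidEnd F F a = mulOp a := rfl

lemma mulOp_add (a b : F) : mulOp (a + b) = mulOp a + mulOp b :=
  map_add (Module.toAddMonoidEnd F F) a b

lemma mulOp_sub (a b : F) : mulOp (a - b) = mulOp a - mulOp b :=
  map_sub (Module.toAddMonoidEnd F F) a b

lemma mulOp_mul (a b : F) : mulOp (a * b) = mulOp a * mulOp b :=
  map_mul (Module.toAddMonoidEnd F F) a b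

@[simp] lemma mulOp_zero : mulOp (0 : F) = 0 := map_zero (Module.toAddMonoidEnd F F)

@[simp] lemma mulOp_one : mulOp (1 : F) = 1 := map_one (Module.toAddMonoidEnd F F)

lemma mulOp_injective : Function.Injective (mulOp : F → AddMonoid.End F) :=
  fun a b h => by simpa using congr($h 1)

lemma commute_mulOp (a b : F) : Commute (mulOp a) (mulOp b) := by
  rw [Commute, SemiconjBy, ← mulOp_mul, ← mulOp_mul, mul_comm]

lemma IsDeriv.map_one (hd : IsDeriv d) : d 1 = 0 := by
  simpa using hd 1 1

lemma IsDeriv.map_mul_eq_zero (hd : IsDeriv d) {a b : F} (ha : d a = 0) (hb : d b = 0) :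
    d (a * b) = 0 := by
  rw [hd, ha, hb, zero_mul, mul_zero, add_zero]

lemma IsDeriv.map_inv_eq_zero (hd : IsDeriv d) {a : F} (ha : d a = 0) : d a⁻¹ = 0 := by
  rcases eq_or_ne a 0 with rfl | ha0
  · simp
  have h := hd a a⁻¹
  rw [mul_inv_cancel₀ ha0, hd.map_one, ha, zero_mul, zero_add, eq_comm] at h
  exact (mul_eq_zero.1 h).resolve_left ha0

lemma IsDeriv.derOp_mul_mulOp (hd : IsDeriv d) (b : F) :
    derOp d * mulOp b = mulOp (d b) + mulOp b * derOp d :=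
  AddMonoidHom.ext fun x => hd b x

variable (d) in
/-- Unlike `OpLE d (k - 1)`, this avoids truncated subtraction: `OpLT d 0 = ⊥`. -/
def OpLT (k : ℕ) : AddSubgroup (AddMonoid.End F) :=
  AddSubgroup.closure {P | ∃ (a : F) (i : ℕ), i < k ∧ P = mulOp a * derOp d ^ i}

lemma OpLE_eq_OpLT (k : ℕ) : OpLE d k = OpLT d (k + 1) := by
  simp only [OpLE, OpLT, Nat.lt_succ_iff]

lemma OpLT_zero : OpLT d 0 = ⊥ := by
  simp [OpLT]

lemma OpLT_mono {k l : ℕ} (h : k ≤ l) : OpLT d k ≤ OpLT d l :=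
  AddSubgroup.closure_mono fun _ ⟨a, i, hi, hP⟩ => ⟨a, i, hi.trans_le h, hP⟩

lemma OpLE_mono {k l : ℕ} (h : k ≤ l) : OpLE d k ≤ OpLE d l := by
  rw [OpLE_eq_OpLT, OpLE_eq_OpLT]; exact OpLT_mono (by omega)

lemma OpLE_le_OpLT {k l : ℕ} (h : k < l) : OpLE d k ≤ OpLT d l := by
  rw [OpLE_eq_OpLT]; exact OpLT_mono h

lemma mulOp_mul_pow_mem_OpLT (a : F) {i k : ℕ} (h : i < k) :
    mulOp a * derOp d ^ i ∈ OpLT d k :=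
  AddSubgroup.subset_closure ⟨a, i, h, rfl⟩

lemma pow_mem_OpLE (i : ℕ) : derOp d ^ i ∈ OpLE d i := by
  simpa [OpLE_eq_OpLT] using mulOp_mul_pow_mem_OpLT (d := d) 1 i.lt_succ_self

lemma mulOp_mem_OpLE (a : F) (k : ℕ) : mulOp a ∈ OpLE d k := by
  simpa [OpLE_eq_OpLT] using mulOp_mul_pow_mem_OpLT (d := d) a k.succ_pos

lemma mem_OpLE_of_sub_mem {A : AddMonoid.End F} {a : F} {m : ℕ}
    (h : A - mulOp a * derOp d ^ m ∈ OpLT d m) : A ∈ OpLE d m := by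
  rw [OpLE_eq_OpLT, ← sub_add_cancel A (mulOp a * derOp d ^ m)]
  exact add_mem (OpLT_mono m.le_succ h) (mulOp_mul_pow_mem_OpLT a m.lt_succ_self)

lemma mem_OpLE_of_sub_pow_mem {A : AddMonoid.End F} {m : ℕ}
    (h : A - derOp d ^ m ∈ OpLT d m) : A ∈ OpLE d m :=
  mem_OpLE_of_sub_mem (a := 1) (by simpa using h)

lemma map_mem_of_mem_OpLT {S : AddSubgroup (AddMonoid.End F)}
    (f : AddMonoid.End F →+ AddMonoid.End F) {k : ℕ}
    (hf : ∀ (a : F) (i : ℕ), i < k → f (mulOp a * derOp d ^ i) ∈ S)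
    {P : AddMonoid.End F} (hP : P ∈ OpLT d k) : f P ∈ S :=
  (AddSubgroup.closure_le (K := S.comap f)).2 (by rintro _ ⟨a, i, hi, rfl⟩; exact hf a i hi) hP

lemma mulOp_mul_mem_OpLT (a : F) {P : AddMonoid.End F} {k : ℕ} (hP : P ∈ OpLT d k) :
    mulOp a * P ∈ OpLT d k :=
  map_mem_of_mem_OpLT (AddMonoidHom.mulLeft (mulOp a))
    (fun b i hi => by
      rw [AddMonoidHom.coe_mulLeft, ← mul_assoc, ← mulOp_mul]
      exact mulOp_mul_pow_mem_OpLT _ hi) hP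

lemma mul_pow_mem_OpLT {P : AddMonoid.End F} {k : ℕ} (hP : P ∈ OpLT d k) (j : ℕ) :
    P * derOp d ^ j ∈ OpLT d (k + j) :=
  map_mem_of_mem_OpLT (AddMonoidHom.mulRight (derOp d ^ j))
    (fun a i hi => by
      rw [AddMonoidHom.mulRight_apply, mul_assoc, ← pow_add]
      exact mulOp_mul_pow_mem_OpLT _ (by omega)) hP

lemma IsDeriv.derOp_mul_mem_OpLT (hd : IsDeriv d) {P : AddMonoid.End F} {k : ℕ}
    (hP : P ∈ OpLT d k) : derOp d * P ∈ OpLT d (k + 1) :=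
  map_mem_of_mem_OpLT (AddMonoidHom.mulLeft (derOp d))
    (fun a i hi => by
      rw [AddMonoidHom.coe_mulLeft, ← mul_assoc, hd.derOp_mul_mulOp, add_mul, mul_assoc,
        ← pow_succ']
      exact add_mem (mulOp_mul_pow_mem_OpLT _ (by omega)) (mulOp_mul_pow_mem_OpLT _ (by omega)))
    hP

lemma IsDeriv.pow_mul_mem_OpLT (hd : IsDeriv d) {P : AddMonoid.End F} {k : ℕ}
    (hP : P ∈ OpLT d k) (i : ℕ) : derOp d ^ i * P ∈ OpLT d (k + i) := by
  induction i with
  | zero => simpa using hP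
  | succ i ih => rw [pow_succ', mul_assoc]; exact hd.derOp_mul_mem_OpLT ih

lemma IsDeriv.mul_mem_OpLT (hd : IsDeriv d) {P Q : AddMonoid.End F} {p q : ℕ}
    (hP : P ∈ OpLT d p) (hQ : Q ∈ OpLE d q) : P * Q ∈ OpLT d (p + q) :=
  map_mem_of_mem_OpLT (AddMonoidHom.mulRight Q)
    (fun a i hi => by
      rw [AddMonoidHom.mulRight_apply, mul_assoc]
      rw [OpLE_eq_OpLT] at hQ
      exact mulOp_mul_mem_OpLT _ (OpLT_mono (by omega) (hd.pow_mul_mem_OpLT hQ i))) hP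

lemma exists_sub_mulOp_mul_pow_mem_OpLT {A : AddMonoid.End F} {m : ℕ} (hA : A ∈ OpLE d m) :
    ∃ a, A - mulOp a * derOp d ^ m ∈ OpLT d m := by
  let lead : F →+ AddMonoid.End F :=
    (AddMonoidHom.mulRight (derOp d ^ m)).comp (Module.toAddMonoidEnd F F).toAddMonoidHom
  have hle : OpLE d m ≤ OpLT d m ⊔ lead.range := by
    refine (AddSubgroup.closure_le _).2 ?_
    rintro _ ⟨a, i, hi, rfl⟩
    rcases hi.lt_or_eq with hi | rfl
    · exact AddSubgroup.mem_sup_left (mulOp_mul_pow_mem_OpLT a hi)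
    · exact AddSubgroup.mem_sup_right ⟨a, rfl⟩
  obtain ⟨B, hB, _, ⟨a, rfl⟩, rfl⟩ := AddSubgroup.mem_sup.1 (hle hA)
  exact ⟨a, by simpa [lead, toAddMonoidEnd_eq_mulOp] using hB⟩

end Operators

section Commutators

variable {F : Type} [Field F] {d : F →+ F}

lemma IsDeriv.lie_pow_mulOp_sub_mem (hd : IsDeriv d) (b : F) (k : ℕ) :
    ⁅derOp d ^ (k + 1), mulOp b⁆ - mulOp (((k + 1 : ℕ) : F) * d b) * derOp d ^ k
      ∈ OpLT d k := by
  induction k with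
  | zero => simp [Ring.lie_def, hd.derOp_mul_mulOp, OpLT_zero]
  | succ k ih =>
    have key : ⁅derOp d ^ (k + 2), mulOp b⁆
          - mulOp (((k + 2 : ℕ) : F) * d b) * derOp d ^ (k + 1)
        = derOp d * (⁅derOp d ^ (k + 1), mulOp b⁆
            - mulOp (((k + 1 : ℕ) : F) * d b) * derOp d ^ k)
          + mulOp (d (((k + 1 : ℕ) : F) * d b)) * derOp d ^ k := by
      have hc : ((k + 2 : ℕ) : F) * d b = d b + ((k + 1 : ℕ) : F) * d b := by push_cast; ring
      rw [hc, mulOp_add, Ring.lie_def, Ring.lie_def]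
      simp only [mul_sub, add_mul, ← mul_assoc, hd.derOp_mul_mulOp]
      simp only [mul_assoc, ← pow_succ']
      abel
    rw [key]
    exact add_mem (hd.derOp_mul_mem_OpLT ih) (mulOp_mul_pow_mem_OpLT _ (by omega))

lemma IsDeriv.lie_pow_mulOp_mem (hd : IsDeriv d) (b : F) (i : ℕ) :
    ⁅derOp d ^ i, mulOp b⁆ ∈ OpLT d i := by
  cases i with
  | zero => simp [Ring.lie_def]
  | succ k =>
    rw [← sub_add_cancel ⁅derOp d ^ (k + 1), mulOp b⁆ (mulOp (((k + 1 : ℕ) : F) * d b) * _)]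
    exact add_mem (OpLT_mono k.le_succ (hd.lie_pow_mulOp_sub_mem b k))
      (mulOp_mul_pow_mem_OpLT _ k.lt_succ_self)

lemma IsDeriv.lie_mem_OpLT (hd : IsDeriv d) {P Q : AddMonoid.End F} {p q : ℕ}
    (hP : P ∈ OpLE d p) (hQ : Q ∈ OpLE d q) : ⁅P, Q⁆ ∈ OpLT d (p + q) := by
  rw [OpLE_eq_OpLT] at hP hQ
  have hgen : ∀ (a b : F) (i j : ℕ), i < p + 1 → j < q + 1 →
      ⁅mulOp a * derOp d ^ i, mulOp b * derOp d ^ j⁆ ∈ OpLT d (p + q) := by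
    intro a b i j hi hj
    have e : ⁅mulOp a * derOp d ^ i, mulOp b * derOp d ^ j⁆
        = mulOp a * (⁅derOp d ^ i, mulOp b⁆ * derOp d ^ j)
          - mulOp b * (⁅derOp d ^ j, mulOp a⁆ * derOp d ^ i) := by
      have hab : mulOp a * (mulOp b * (derOp d ^ i * derOp d ^ j))
          = mulOp b * (mulOp a * (derOp d ^ j * derOp d ^ i)) := by
        rw [← mul_assoc, (commute_mulOp a b).eq, mul_assoc, ← pow_add, ← pow_add, add_comm i]
      simp only [Ring.lie_def, mul_sub, sub_mul, mul_assoc, hab]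
      abel
    rw [e]
    exact sub_mem
      (mulOp_mul_mem_OpLT _ (OpLT_mono (by omega)
        (mul_pow_mem_OpLT (hd.lie_pow_mulOp_mem b i) j)))
      (mulOp_mul_mem_OpLT _ (OpLT_mono (by omega)
        (mul_pow_mem_OpLT (hd.lie_pow_mulOp_mem a j) i)))
  have hleft : ∀ (a : F) (i : ℕ), i < p + 1 → ⁅mulOp a * derOp d ^ i, Q⁆ ∈ OpLT d (p + q) :=
    fun a i hi => map_mem_of_mem_OpLT
      (AddMonoidHom.mulLeft (mulOp a * derOp d ^ i) - AddMonoidHom.mulRight _)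
      (fun b j hj => by simpa [Ring.lie_def] using hgen a b i j hi hj) hQ
  simpa [Ring.lie_def] using
    map_mem_of_mem_OpLT (AddMonoidHom.mulRight Q - AddMonoidHom.mulLeft Q)
      (fun a i hi => by simpa [Ring.lie_def] using hleft a i hi) hP

end Commutators

section LeadingCoefficients

variable {F : Type} [Field F] {d : F →+ F}

lemma IsDeriv.lie_pow_sub_mem_of_sub_mem (hd : IsDeriv d) {A : AddMonoid.End F} {a : F}
    {m : ℕ} (hA : A - mulOp a * derOp d ^ m ∈ OpLT d m) (k : ℕ) :
    ⁅derOp d ^ (k + 1), A⁆ - mulOp (((k + 1 : ℕ) : F) * d a) * derOp d ^ (k + m)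
      ∈ OpLT d (k + m) := by
  have hlow : ⁅derOp d ^ (k + 1), A - mulOp a * derOp d ^ m⁆ ∈ OpLT d (k + m) := by
    cases m with
    | zero =>
      rw [OpLT_zero, AddSubgroup.mem_bot] at hA
      rw [hA, Ring.lie_def, mul_zero, zero_mul, sub_zero]
      exact zero_mem _
    | succ m =>
      rw [← OpLE_eq_OpLT] at hA
      exact OpLT_mono (by omega) (hd.lie_mem_OpLT (pow_mem_OpLE _) hA)
  have htop : ⁅derOp d ^ (k + 1), mulOp a * derOp d ^ m⁆
      = ⁅derOp d ^ (k + 1), mulOp a⁆ * derOp d ^ m := by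
    simp only [Ring.lie_def, sub_mul, mul_assoc, ← pow_add, add_comm m]
  have e : ⁅derOp d ^ (k + 1), A⁆ - mulOp (((k + 1 : ℕ) : F) * d a) * derOp d ^ (k + m)
      = ⁅derOp d ^ (k + 1), A - mulOp a * derOp d ^ m⁆
        + (⁅derOp d ^ (k + 1), mulOp a⁆ - mulOp (((k + 1 : ℕ) : F) * d a) * derOp d ^ k)
          * derOp d ^ m := by
    rw [sub_mul, mul_assoc, ← pow_add, ← htop]
    simp only [Ring.lie_def, mul_sub, sub_mul]
    abel
  rw [e]
  exact add_mem hlow (mul_pow_mem_OpLT (hd.lie_pow_mulOp_sub_mem a k) m)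

lemma HasOrd.unique {P : AddMonoid.End F} {k l : ℕ} (hk : HasOrd d P k) (hl : HasOrd d P l) :
    k = l :=
  le_antisymm (hk.2 l hl.1) (hl.2 k hk.1)

variable [CharZero F]

/-- Commuting with `x` lowers the order by one and multiplies the top coefficient by `m * d x`. -/
lemma IsDeriv.eq_zero_of_mulOp_mul_pow_mem_OpLT (hd : IsDeriv d) {x : F} (hx : d x ≠ 0)
    {c : F} {m : ℕ} (h : mulOp c * derOp d ^ m ∈ OpLT d m) : c = 0 := by
  induction m generalizing c with
  | zero =>
    rw [OpLT_zero, AddSubgroup.mem_bot, pow_zero, mul_one] at h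
    exact mulOp_injective (h.trans mulOp_zero.symm)
  | succ m ih =>
    rw [← OpLE_eq_OpLT] at h
    have hbr : ⁅mulOp c * derOp d ^ (m + 1), mulOp x⁆ ∈ OpLT d m := by
      simpa using hd.lie_mem_OpLT h (mulOp_mem_OpLE x 0)
    have e : mulOp (c * (((m + 1 : ℕ) : F) * d x)) * derOp d ^ m
        = ⁅mulOp c * derOp d ^ (m + 1), mulOp x⁆
          - mulOp c * (⁅derOp d ^ (m + 1), mulOp x⁆
            - mulOp (((m + 1 : ℕ) : F) * d x) * derOp d ^ m) := by
      simp only [Ring.lie_def, mul_sub, mulOp_mul, mul_assoc]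
      rw [← mul_assoc (mulOp x), ← (commute_mulOp c x).eq, mul_assoc]
      abel
    have h := sub_mem hbr (mulOp_mul_mem_OpLT c (hd.lie_pow_mulOp_sub_mem x m))
    rw [← e] at h
    simpa [hx, Nat.cast_add_one_ne_zero] using ih h

lemma IsDeriv.hasOrd_of_sub_mem (hd : IsDeriv d) {x : F} (hx : d x ≠ 0) {A : AddMonoid.End F}
    {a : F} {m : ℕ} (ha : a ≠ 0) (hA : A - mulOp a * derOp d ^ m ∈ OpLT d m) :
    HasOrd d A m := by
  refine ⟨mem_OpLE_of_sub_mem hA, fun k hk => not_lt.1 fun hkm => ha ?_⟩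
  rw [OpLE_eq_OpLT] at hk
  exact hd.eq_zero_of_mulOp_mul_pow_mem_OpLT hx (by simpa using sub_mem (OpLT_mono hkm hk) hA)

lemma IsDeriv.map_eq_zero_of_lie_mem (hd : IsDeriv d) {x : F} (hx : d x ≠ 0)
    {L A : AddMonoid.End F} {n m : ℕ} {a : F} (hn : 1 ≤ n)
    (hnf : L - derOp d ^ n ∈ OpLE d (n - 2)) (hA : A - mulOp a * derOp d ^ m ∈ OpLT d m)
    (hLA : ⁅L, A⁆ ∈ OpLT d (n - 1 + m)) : d a = 0 := by
  obtain ⟨k, rfl⟩ : ∃ k, n = k + 1 := ⟨n - 1, by omega⟩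
  rw [Nat.add_sub_cancel] at hLA
  have hrest : ⁅L - derOp d ^ (k + 1), A⁆ ∈ OpLT d (k + m) :=
    OpLT_mono (by omega) (hd.lie_mem_OpLT hnf (mem_OpLE_of_sub_mem hA))
  have e : mulOp (((k + 1 : ℕ) : F) * d a) * derOp d ^ (k + m)
      = ⁅L, A⁆ - ⁅L - derOp d ^ (k + 1), A⁆
        - (⁅derOp d ^ (k + 1), A⁆ - mulOp (((k + 1 : ℕ) : F) * d a) * derOp d ^ (k + m)) := by
    simp only [Ring.lie_def, mul_sub, sub_mul]
    abel
  have h := sub_mem (sub_mem hLA hrest) (hd.lie_pow_sub_mem_of_sub_mem hA k)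
  rw [← e] at h
  simpa [Nat.cast_add_one_ne_zero] using hd.eq_zero_of_mulOp_mul_pow_mem_OpLT hx h

end LeadingCoefficients

section Orders

variable {F : Type} [Field F] {d : F →+ F}

lemma exists_ne_zero_of_hasOrd {L : AddMonoid.End F} {n : ℕ} (hn : 1 ≤ n)
    (hL : HasOrd d L n) : ∃ x, d x ≠ 0 := by
  by_contra! h
  have hD : derOp d = 0 := AddMonoidHom.ext h
  have hle : OpLE d n ≤ OpLE d 0 := by
    refine (AddSubgroup.closure_le _).2 ?_
    rintro _ ⟨a, i, -, rfl⟩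
    cases i with
    | zero => simpa using mulOp_mem_OpLE a 0
    | succ i => simp [hD]
  exact absurd (hL.2 0 (hle hL.1)) (by omega)

lemma IsDeriv.pow_sub_pow_mem_OpLT (hd : IsDeriv d) {L : AddMonoid.End F} {n : ℕ}
    (hL : L - derOp d ^ n ∈ OpLT d n) (k : ℕ) : L ^ k - derOp d ^ (n * k) ∈ OpLT d (n * k) := by
  induction k with
  | zero => simp
  | succ k ih =>
    have e : L ^ (k + 1) - derOp d ^ (n * (k + 1))
        = (L ^ k - derOp d ^ (n * k)) * L + derOp d ^ (n * k) * (L - derOp d ^ n) := by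
      rw [sub_mul, mul_sub, pow_succ, ← pow_add, ← Nat.mul_succ]
      abel
    rw [e]
    exact add_mem (hd.mul_mem_OpLT ih (mem_OpLE_of_sub_pow_mem hL))
      (OpLT_mono (by rw [Nat.mul_succ, add_comm]) (hd.pow_mul_mem_OpLT hL (n * k)))

variable [CharZero F]

lemma IsDeriv.exists_hasOrd_sum (hd : IsDeriv d) {x : F} (hx : d x ≠ 0) {ι : Type*}
    (s : Finset ι) (o : ι → ℕ) (ho : Set.InjOn o s) (P : ι → AddMonoid.End F)
    (hP : ∀ i ∈ s, P i - derOp d ^ o i ∈ OpLT d (o i)) (c : ι → F) (hc : ∃ i ∈ s, c i ≠ 0) :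
    ∃ i ∈ s, c i ≠ 0 ∧ HasOrd d (∑ i ∈ s, mulOp (c i) * P i) (o i) := by
  classical
  obtain ⟨i₀, hi₀, hmax⟩ := (s.filter (c · ≠ 0)).exists_max_image o
    (by obtain ⟨i, hi, hci⟩ := hc; exact ⟨i, mem_filter.2 ⟨hi, hci⟩⟩)
  obtain ⟨hi₀s, hci₀⟩ := mem_filter.1 hi₀
  refine ⟨i₀, hi₀s, hci₀, hd.hasOrd_of_sub_mem hx hci₀ ?_⟩
  have e : ∑ i ∈ s, mulOp (c i) * P i - mulOp (c i₀) * derOp d ^ o i₀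
      = mulOp (c i₀) * (P i₀ - derOp d ^ o i₀) + ∑ i ∈ s.erase i₀, mulOp (c i) * P i := by
    rw [← add_sum_erase s _ hi₀s, mul_sub]
    abel
  rw [e]
  refine add_mem (mulOp_mul_mem_OpLT _ (hP i₀ hi₀s)) (sum_mem fun i hi => ?_)
  obtain ⟨hne, his⟩ := mem_erase.1 hi
  by_cases hci : c i = 0
  · simp [hci]
  have hlt : o i < o i₀ :=
    (hmax i (mem_filter.2 ⟨his, hci⟩)).lt_of_ne fun h => hne (ho his hi₀s h)
  exact mulOp_mul_mem_OpLT _ (OpLE_le_OpLT hlt (mem_OpLE_of_sub_pow_mem (hP i his)))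

lemma IsDeriv.dvd_of_mem_CPoly (hd : IsDeriv d) {x : F} (hx : d x ≠ 0) {L : AddMonoid.End F}
    {n : ℕ} (hn : 1 ≤ n) (hL : L - derOp d ^ n ∈ OpLT d n) {P : AddMonoid.End F} {k : ℕ}
    (hP : P ∈ CPoly d L) (hk : HasOrd d P k) : n ∣ k := by
  obtain ⟨p, -, rfl⟩ := hP
  by_cases h : ∃ i ∈ range (p.natDegree + 1), p.coeff i ≠ 0
  · obtain ⟨i, -, -, hi⟩ := hd.exists_hasOrd_sum hx _ (n * ·)
      (fun i _ j _ hij => Nat.eq_of_mul_eq_mul_left hn hij) (L ^ ·)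
      (fun i _ => hd.pow_sub_pow_mem_OpLT hL i) p.coeff h
    exact ⟨i, hk.unique hi⟩
  · push Not at h
    rw [sum_eq_zero fun i hi => by rw [h i hi, mulOp_zero, zero_mul]] at hk
    rw [Nat.le_zero.1 (hk.2 0 (zero_mem _))]
    exact dvd_zero n

end Orders

section Centralizer

variable {F : Type} [Field F] {d : F →+ F} {L : AddMonoid.End F}

lemma sum_mem_CPoly {ι : Type*} (s : Finset ι) (c : ι → F) (e : ι → ℕ)
    (hc : ∀ i ∈ s, d (c i) = 0) : ∑ i ∈ s, mulOp (c i) * L ^ e i ∈ CPoly d L := by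
  classical
  refine ⟨∑ i ∈ s, Polynomial.monomial (e i) (c i), fun k => ?_, ?_⟩
  · simp only [Polynomial.finsetSum_coeff, Polynomial.coeff_monomial, map_sum]
    exact sum_eq_zero fun i hi => by split_ifs; exacts [hc i hi, map_zero d]
  · refine Eq.trans ?_ (Polynomial.eval₂_eq_sum_range (Module.toAddMonoidEnd F F) L)
    simp [Polynomial.eval₂_finsetSum, toAddMonoidEnd_eq_mulOp]

lemma IsDeriv.commute_mulOp_of_mem_OpLE (hd : IsDeriv d) {a : F} (ha : d a = 0)
    {P : AddMonoid.End F} {k : ℕ} (hP : P ∈ OpLE d k) : Commute (mulOp a) P := by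
  have hD : derOp d ∈ Subring.centralizer {mulOp a} := by
    rw [Subring.mem_centralizer_iff]
    rintro _ rfl
    rw [hd.derOp_mul_mulOp, ha, mulOp_zero, zero_add]
  have hle : OpLE d k ≤ (Subring.centralizer {mulOp a}).toAddSubgroup := by
    refine (AddSubgroup.closure_le _).2 ?_
    rintro _ ⟨b, i, -, rfl⟩
    refine Subring.mem_toAddSubgroup.2 (mul_mem ?_ (pow_mem hD i))
    rw [Subring.mem_centralizer_iff]
    rintro _ rfl
    exact (commute_mulOp a b).eq
  exact Subring.mem_centralizer_iff.1 (hle hP) _ rfl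

variable (d) in
def centralizerOp (L : AddMonoid.End F) : AddSubgroup (AddMonoid.End F) where
  carrier := Cent d L
  zero_mem' := ⟨⟨0, zero_mem _⟩, by rw [mul_zero, zero_mul]⟩
  add_mem' := by
    rintro A A' ⟨⟨p, hp⟩, hA⟩ ⟨⟨q, hq⟩, hA'⟩
    exact ⟨⟨p + q, add_mem (OpLE_mono (by omega) hp) (OpLE_mono (by omega) hq)⟩,
      by rw [mul_add, add_mul, hA, hA']⟩
  neg_mem' := by
    rintro A ⟨⟨p, hp⟩, hA⟩
    exact ⟨⟨p, neg_mem hp⟩,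
      (mul_neg L A).trans ((congrArg Neg.neg hA).trans (neg_mul A L).symm)⟩

lemma IsDeriv.mulOp_mul_mem_Cent (hd : IsDeriv d) (hL : IsOp d L) {a : F} (ha : d a = 0)
    {A : AddMonoid.End F} (hA : A ∈ Cent d L) : mulOp a * A ∈ Cent d L := by
  obtain ⟨k, hk⟩ := hL
  obtain ⟨⟨p, hp⟩, hLA⟩ := hA
  refine ⟨⟨p, ?_⟩, ?_⟩
  · rw [OpLE_eq_OpLT] at hp ⊢
    exact mulOp_mul_mem_OpLT a hp
  · rw [← mul_assoc, ← (hd.commute_mulOp_of_mem_OpLE ha hk).eq, mul_assoc, hLA, mul_assoc]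

lemma IsDeriv.pow_mem_Cent (hd : IsDeriv d) {n : ℕ} (hL : L - derOp d ^ n ∈ OpLT d n) (k : ℕ) :
    L ^ k ∈ Cent d L :=
  ⟨⟨n * k, mem_OpLE_of_sub_pow_mem (hd.pow_sub_pow_mem_OpLT hL k)⟩,
    (pow_succ' L k).symm.trans (pow_succ L k)⟩

end Centralizer

section Expansion

variable {F : Type} [Field F] {d : F →+ F} {L : AddMonoid.End F} {n : ℕ}
  {B : ℕ → AddMonoid.End F}

variable (L n B) in
def extBasis (i : ℕ) : AddMonoid.End F := if n ∣ i then L ^ (i / n) else B i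

lemma IsDeriv.extBasis_sub_pow_mem (hd : IsDeriv d) (hL : L - derOp d ^ n ∈ OpLT d n)
    (hB : ∀ j, ¬ n ∣ j → B j - derOp d ^ j ∈ OpLT d j) (i : ℕ) :
    extBasis L n B i - derOp d ^ i ∈ OpLT d i := by
  unfold extBasis
  split_ifs with h
  · simpa [Nat.mul_div_cancel' h] using hd.pow_sub_pow_mem_OpLT hL (i / n)
  · exact hB i h

lemma lie_extBasis_mem (hB : ∀ j, ¬ n ∣ j → ⁅L, B j⁆ ∈ OpLT d (n - 1)) (i : ℕ) :
    ⁅L, extBasis L n B i⁆ ∈ OpLT d (n - 1) := by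
  unfold extBasis
  split_ifs with h
  · rw [commute_iff_lie_eq.1 (Commute.self_pow L _)]
    exact zero_mem _
  · exact hB i h

lemma lie_sub_mul_of_commute {a A X : AddMonoid.End F} (h : Commute a L) :
    ⁅L, A - a * X⁆ = ⁅L, A⁆ - a * ⁅L, X⁆ := by
  simp only [Ring.lie_def, mul_sub, sub_mul, ← mul_assoc, ← h.eq]
  abel

variable [CharZero F]

lemma IsDeriv.exists_const_expansion (hd : IsDeriv d) {x : F} (hx : d x ≠ 0) (hn : 1 ≤ n)
    (hnf : L - derOp d ^ n ∈ OpLE d (n - 2))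
    (hBmon : ∀ j, ¬ n ∣ j → B j - derOp d ^ j ∈ OpLT d j)
    (hBcomm : ∀ j, ¬ n ∣ j → ⁅L, B j⁆ ∈ OpLT d (n - 1)) {m : ℕ} {A : AddMonoid.End F}
    (hA : A ∈ OpLT d m) (hLA : ⁅L, A⁆ ∈ OpLT d (n - 1)) :
    ∃ c : ℕ → F, (∀ j, d (c j) = 0) ∧ A = ∑ i ∈ range m, mulOp (c i) * extBasis L n B i := by
  have hLmon : L - derOp d ^ n ∈ OpLT d n := OpLE_le_OpLT (by omega) hnf
  induction m generalizing A with
  | zero =>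
    rw [OpLT_zero, AddSubgroup.mem_bot] at hA
    exact ⟨0, fun _ => map_zero d, by simp [hA]⟩
  | succ m ih =>
    rw [← OpLE_eq_OpLT] at hA
    obtain ⟨a, ha⟩ := exists_sub_mulOp_mul_pow_mem_OpLT hA
    have hda : d a = 0 := hd.map_eq_zero_of_lie_mem hx hn hnf ha (OpLT_mono (by omega) hLA)
    have hcomm := hd.commute_mulOp_of_mem_OpLE hda (mem_OpLE_of_sub_pow_mem hLmon)
    have hlow : A - mulOp a * extBasis L n B m ∈ OpLT d m := by
      rw [← sub_sub_sub_cancel_right A (mulOp a * extBasis L n B m) (mulOp a * derOp d ^ m),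
        ← mul_sub]
      exact sub_mem ha (mulOp_mul_mem_OpLT a (hd.extBasis_sub_pow_mem hLmon hBmon m))
    have hLlow : ⁅L, A - mulOp a * extBasis L n B m⁆ ∈ OpLT d (n - 1) := by
      rw [lie_sub_mul_of_commute hcomm]
      exact sub_mem hLA (mulOp_mul_mem_OpLT a (lie_extBasis_mem hBcomm m))
    obtain ⟨c, hc, hrep⟩ := ih hlow hLlow
    refine ⟨Function.update c m a, fun j => ?_, ?_⟩
    · rcases eq_or_ne j m with rfl | hj
      · simpa using hda
      · simpa [hj] using hc j
    · rw [sum_range_succ, Function.update_self, sum_congr rfl fun i hi => by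
        rw [Function.update_of_ne (mem_range.1 hi).ne], ← hrep, sub_add_cancel]

end Expansion

section ConstantSolutions

variable {F : Type} [Field F] {d : F →+ F} {L : AddMonoid.End F} {B : ℕ → AddMonoid.End F}
  {n m : ℕ}

lemma mem_Jset {j : ℕ} : j ∈ Jset n m ↔ j ≤ m ∧ ¬ n ∣ j := by
  simp [Jset]

lemma pos_of_not_dvd {j : ℕ} (h : ¬ n ∣ j) : 0 < j :=
  Nat.pos_of_ne_zero fun hj => h (hj ▸ dvd_zero n)

lemma not_mem_Jset_pred : m ∉ Jset n (m - 1) := fun h => by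
  have := pos_of_not_dvd (mem_Jset.1 h).2
  have := (mem_Jset.1 h).1
  omega

lemma Jset_eq_insert (hm : 1 ≤ m) (hnm : ¬ n ∣ m) : Jset n m = insert m (Jset n (m - 1)) := by
  rw [Jset, Jset, Nat.sub_add_cancel hm, range_add_one, filter_insert, if_pos hnm]

lemma mem_Jset_iff_eq_or (hm : 1 ≤ m) (hnm : ¬ n ∣ m) {j : ℕ} :
    j ∈ Jset n m ↔ j = m ∨ j ∈ Jset n (m - 1) := by
  rw [Jset_eq_insert hm hnm, mem_insert]

lemma theta_Jset_eq (hm : 1 ≤ m) (hnm : ¬ n ∣ m) (c : ℕ → F) :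
    theta c B (Jset n m) = mulOp (c m) * B m + theta c B (Jset n (m - 1)) := by
  rw [theta, Jset_eq_insert hm hnm, sum_insert not_mem_Jset_pred, theta]

lemma theta_congr {c c' : ℕ → F} {J : Finset ℕ} (h : ∀ j ∈ J, c j = c' j) :
    theta c B J = theta c' B J :=
  sum_congr rfl fun j hj => by rw [h j hj]

lemma theta_add (c c' : ℕ → F) (J : Finset ℕ) :
    theta (c + c') B J = theta c B J + theta c' B J := by
  simp only [theta, Pi.add_apply, mulOp_add, add_mul, sum_add_distrib]

lemma theta_sub (c c' : ℕ → F) (J : Finset ℕ) :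
    theta (c - c') B J = theta c B J - theta c' B J := by
  simp only [theta, Pi.sub_apply, mulOp_sub, sub_mul, sum_sub_distrib]

lemma theta_smul (α : F) (c : ℕ → F) (J : Finset ℕ) :
    theta (α • c) B J = mulOp α * theta c B J := by
  simp only [theta, Pi.smul_apply, smul_eq_mul, mulOp_mul, mul_sum, mul_assoc]

lemma sub_mem_VmSet {v w : ℕ → F} (hv : v ∈ VmSet d L B n m) (hw : w ∈ VmSet d L B n m) :
    v - w ∈ VmSet d L B n m := by
  obtain ⟨hv₁, hv₂, hv₃⟩ := hv
  obtain ⟨hw₁, hw₂, hw₃⟩ := hw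
  refine ⟨fun j => by simp [hv₁ j, hw₁ j], fun j hj => by simp [hv₂ j hj, hw₂ j hj], ?_⟩
  rw [theta_sub]
  exact (centralizerOp d L).sub_mem hv₃ hw₃

lemma IsDeriv.smul_mem_VmSet (hd : IsDeriv d) (hL : IsOp d L) {α : F} (hα : d α = 0)
    {v : ℕ → F} (hv : v ∈ VmSet d L B n m) : α • v ∈ VmSet d L B n m := by
  obtain ⟨hv₁, hv₂, hv₃⟩ := hv
  refine ⟨fun j => hd.map_mul_eq_zero hα (hv₁ j), fun j hj => by simp [hv₂ j hj], ?_⟩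
  rw [theta_smul]
  exact hd.mulOp_mul_mem_Cent hL hα hv₃

lemma mem_VmSet_pred_iff (hm : 1 ≤ m) (hnm : ¬ n ∣ m) {v : ℕ → F} :
    v ∈ VmSet d L B n (m - 1) ↔ v ∈ VmSet d L B n m ∧ v m = 0 := by
  simp only [VmSet, Set.mem_ofPred_eq, theta_Jset_eq hm hnm, mem_Jset_iff_eq_or hm hnm, not_or]
  constructor
  · rintro ⟨hv₁, hv₂, hv₃⟩
    have hvm : v m = 0 := hv₂ m not_mem_Jset_pred
    exact ⟨⟨hv₁, fun j hj => hv₂ j hj.2, by rwa [hvm, mulOp_zero, zero_mul, zero_add]⟩, hvm⟩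
  · rintro ⟨⟨hv₁, hv₂, hv₃⟩, hvm⟩
    refine ⟨hv₁, fun j hj => ?_, by rwa [hvm, mulOp_zero, zero_mul, zero_add] at hv₃⟩
    rcases eq_or_ne j m with rfl | hjm
    exacts [hvm, hv₂ j ⟨hjm, hj⟩]

lemma sub_mem_VmSet_of_mem_FmSet {c c' : ℕ → F} (hc : c ∈ FmSet d L B n m)
    (hc' : c' ∈ FmSet d L B n m) : c - c' ∈ VmSet d L B n (m - 1) := by
  obtain ⟨hc₁, hc₂, hc₃⟩ := hc
  obtain ⟨hc'₁, hc'₂, hc'₃⟩ := hc'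
  refine ⟨fun j => by simp [hc₁ j, hc'₁ j], fun j hj => by simp [hc₂ j hj, hc'₂ j hj], ?_⟩
  rw [theta_sub, ← add_sub_add_left_eq_sub _ _ (B m)]
  exact (centralizerOp d L).sub_mem hc₃ hc'₃

lemma add_mem_FmSet {c v : ℕ → F} (hc : c ∈ FmSet d L B n m)
    (hv : v ∈ VmSet d L B n (m - 1)) : c + v ∈ FmSet d L B n m := by
  obtain ⟨hc₁, hc₂, hc₃⟩ := hc
  obtain ⟨hv₁, hv₂, hv₃⟩ := hv
  refine ⟨fun j => by simp [hc₁ j, hv₁ j], fun j hj => by simp [hc₂ j hj, hv₂ j hj], ?_⟩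
  rw [theta_add, ← add_assoc]
  exact (centralizerOp d L).add_mem hc₃ hv₃

lemma IsDeriv.mem_FmSet_iff (hd : IsDeriv d) (hm : 1 ≤ m) (hnm : ¬ n ∣ m) {c : ℕ → F} :
    c ∈ FmSet d L B n m ↔ c m = 0 ∧ Function.update c m 1 ∈ VmSet d L B n m := by
  have htheta : theta (Function.update c m 1) B (Jset n m) = B m + theta c B (Jset n (m - 1)) := by
    rw [theta_Jset_eq hm hnm, Function.update_self, mulOp_one, one_mul,
      theta_congr fun j hj => Function.update_of_ne (ne_of_mem_of_not_mem hj not_mem_Jset_pred) _ _]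
  simp only [FmSet, VmSet, Set.mem_ofPred_eq, htheta, mem_Jset_iff_eq_or hm hnm, not_or]
  constructor
  · rintro ⟨hc₁, hc₂, hc₃⟩
    refine ⟨hc₂ m not_mem_Jset_pred, ⟨fun j => ?_, fun j hj => ?_, hc₃⟩⟩
    · rcases eq_or_ne j m with rfl | hjm
      · simpa using hd.map_one
      · simpa [hjm] using hc₁ j
    · simpa [hj.1] using hc₂ j hj.2
  · rintro ⟨hcm, hc₁, hc₂, hc₃⟩
    refine ⟨fun j => ?_, fun j hj => ?_, hc₃⟩
    · rcases eq_or_ne j m with rfl | hjm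
      · simp [hcm]
      · simpa [hjm] using hc₁ j
    · rcases eq_or_ne j m with rfl | hjm
      · exact hcm
      · simpa [hjm] using hc₂ j ⟨hjm, hj⟩

lemma FmSet_eq_empty_or_affine :
    FmSet d L B n m = ∅ ∨ ∃ c ∈ FmSet d L B n m,
      FmSet d L B n m = {c' | ∃ v ∈ VmSet d L B n (m - 1), c' = fun j => c j + v j} := by
  refine (FmSet d L B n m).eq_empty_or_nonempty.imp_right fun ⟨c, hc⟩ => ⟨c, hc, ?_⟩
  ext c'
  refine ⟨fun hc' => ⟨c' - c, sub_mem_VmSet_of_mem_FmSet hc' hc, ?_⟩, ?_⟩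
  · ext j; simp
  · rintro ⟨v, hv, rfl⟩
    exact add_mem_FmSet hc hv

lemma IsDeriv.sub_smul_mem_VmSet_pred (hd : IsDeriv d) (hL : IsOp d L) (hm : 1 ≤ m)
    (hnm : ¬ n ∣ m) {v t : ℕ → F} (hv : v ∈ VmSet d L B n m) (ht : t ∈ VmSet d L B n m)
    {α : F} (hα : d α = 0) (hvt : v m = α * t m) : v - α • t ∈ VmSet d L B n (m - 1) :=
  (mem_VmSet_pred_iff hm hnm).2
    ⟨sub_mem_VmSet hv (hd.smul_mem_VmSet hL hα ht), by simp [hvt]⟩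

lemma IsDeriv.VmSet_eq_or_exists_complement (hd : IsDeriv d) (hL : IsOp d L) (hm : 1 ≤ m)
    (hnm : ¬ n ∣ m) :
    VmSet d L B n m = VmSet d L B n (m - 1) ∨
      ∃ t ∈ VmSet d L B n m, t ∉ VmSet d L B n (m - 1) ∧
        ∀ v ∈ VmSet d L B n m, ∃ α : F, d α = 0 ∧
          (fun j => v j - α * t j) ∈ VmSet d L B n (m - 1) := by
  by_cases h : ∃ t ∈ VmSet d L B n m, t m ≠ 0
  · obtain ⟨t, ht, htm⟩ := h
    refine Or.inr ⟨t, ht, fun ht' => htm ((mem_VmSet_pred_iff hm hnm).1 ht').2, fun v hv => ?_⟩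
    have hα := hd.map_mul_eq_zero (hv.1 m) (hd.map_inv_eq_zero (ht.1 m))
    exact ⟨v m * (t m)⁻¹, hα, hd.sub_smul_mem_VmSet_pred hL hm hnm hv ht hα (by field_simp)⟩
  · push Not at h
    exact Or.inl (Set.ext fun v =>
      ⟨fun hv => (mem_VmSet_pred_iff hm hnm).2 ⟨hv, h v hv⟩,
        fun hv => ((mem_VmSet_pred_iff hm hnm).1 hv).1⟩)

lemma IsDeriv.VmSet_eq_span (hd : IsDeriv d) (hL : IsOp d L) (hm : 1 ≤ m) (hnm : ¬ n ∣ m)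
    (hV : ∀ ξ ∈ VmSet d L B n (m - 1), ξ = 0) {c : ℕ → F} (hc : c ∈ FmSet d L B n m) :
    VmSet d L B n m = {v | ∃ α : F, d α = 0 ∧ v = fun j => if j = m then α else α * c j} := by
  obtain ⟨hcm, hc₁⟩ := (hd.mem_FmSet_iff hm hnm).1 hc
  have hline : ∀ α : F, (fun j => if j = m then α else α * c j) = α • Function.update c m 1 := by
    intro α; ext j; by_cases hj : j = m <;> simp [hj]
  ext v
  simp only [Set.mem_ofPred_eq, hline]
  refine ⟨fun hv => ⟨v m, hv.1 m, ?_⟩, ?_⟩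
  · exact (sub_eq_zero.1 (hV _ (hd.sub_smul_mem_VmSet_pred hL hm hnm hv hc₁ (hv.1 m) (by simp))))
  · rintro ⟨α, hα, rfl⟩
    exact hd.smul_mem_VmSet hL hα hc₁

lemma IsDeriv.FmSet_eq_singleton (hd : IsDeriv d) (hL : IsOp d L) (hm : 1 ≤ m) (hnm : ¬ n ∣ m)
    (hV : ∀ ξ ∈ VmSet d L B n (m - 1), ξ = 0) {v : ℕ → F} (hv : v ∈ VmSet d L B n m)
    (hvm : v m ≠ 0) : ∃ c, FmSet d L B n m = {c} := by
  set w := (v m)⁻¹ • v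
  have hw : w ∈ VmSet d L B n m := hd.smul_mem_VmSet hL (hd.map_inv_eq_zero (hv.1 m)) hv
  have hwm : w m = 1 := by simp [w, hvm]
  have hc : Function.update w m 0 ∈ FmSet d L B n m := by
    rw [hd.mem_FmSet_iff hm hnm, Function.update_idem, ← hwm, Function.update_eq_self]
    exact ⟨Function.update_self .., hw⟩
  refine ⟨_, Set.eq_singleton_iff_unique_mem.2 ⟨hc, fun c' hc' => ?_⟩⟩
  exact sub_eq_zero.1 (hV _ (sub_mem_VmSet_of_mem_FmSet hc' hc))

end ConstantSolutions

section Level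

variable {F : Type} [Field F] [CharZero F] {d : F →+ F} {L : AddMonoid.End F} {n : ℕ}
  {B : ℕ → AddMonoid.End F} {M : ℕ}

lemma IsDeriv.exists_le_of_mem_VmSet (hd : IsDeriv d) {x : F} (hx : d x ≠ 0) (hn : 1 ≤ n)
    (hL : L - derOp d ^ n ∈ OpLT d n) (hB : ∀ j, ¬ n ∣ j → B j - derOp d ^ j ∈ OpLT d j)
    (hlev : Level d L M) {m : ℕ} {ξ : ℕ → F} (hξ : ξ ∈ VmSet d L B n m) (hξ0 : ξ ≠ 0) :
    ∃ j ∈ Jset n m, ξ j ≠ 0 ∧ M ≤ j := by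
  obtain ⟨-, hsupp, hcent⟩ := hξ
  have hne : ∃ j ∈ Jset n m, ξ j ≠ 0 := by
    obtain ⟨j, hj⟩ := Function.ne_iff.1 hξ0
    exact ⟨j, by_contra fun h => hj (hsupp j h), hj⟩
  obtain ⟨j, hj, hξj, hord⟩ := hd.exists_hasOrd_sum hx (Jset n m) id (Set.injOn_id _) B
    (fun j hj => hB j (mem_Jset.1 hj).2) ξ hne
  exact ⟨j, hj, hξj, hlev.2 _ hcent
    (fun hcp => (mem_Jset.1 hj).2 (hd.dvd_of_mem_CPoly hx hn hL hcp hord)) j hord⟩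

lemma IsDeriv.eq_zero_of_mem_VmSet_pred_level (hd : IsDeriv d) {x : F} (hx : d x ≠ 0)
    (hn : 1 ≤ n) (hL : L - derOp d ^ n ∈ OpLT d n)
    (hB : ∀ j, ¬ n ∣ j → B j - derOp d ^ j ∈ OpLT d j) (hlev : Level d L M) :
    ∀ ξ ∈ VmSet d L B n (M - 1), ξ = 0 := by
  intro ξ hξ
  by_contra hξ0
  obtain ⟨j, hj, -, hMj⟩ := hd.exists_le_of_mem_VmSet hx hn hL hB hlev hξ hξ0
  obtain ⟨hjM, hnj⟩ := mem_Jset.1 hj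
  have := pos_of_not_dvd hnj
  omega

lemma IsDeriv.exists_ne_zero_mem_VmSet_level (hd : IsDeriv d) {x : F} (hx : d x ≠ 0)
    (hn : 1 ≤ n) (hnf : L - derOp d ^ n ∈ OpLE d (n - 2))
    (hBmon : ∀ j, ¬ n ∣ j → B j - derOp d ^ j ∈ OpLT d j)
    (hBcomm : ∀ j, ¬ n ∣ j → ⁅L, B j⁆ ∈ OpLT d (n - 1)) (hlev : Level d L M) :
    ∃ ξ ∈ VmSet d L B n M, ξ ≠ 0 := by
  obtain ⟨⟨Q, hQ, hQnp, hQord⟩, -⟩ := hlev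
  have hLmon : L - derOp d ^ n ∈ OpLT d n := OpLE_le_OpLT (by omega) hnf
  obtain ⟨c, hc, hQc⟩ := hd.exists_const_expansion hx hn hnf hBmon hBcomm
    (by rw [← OpLE_eq_OpLT]; exact hQord.1)
    (by rw [Ring.lie_def, hQ.2, sub_self]; exact zero_mem _)
  set R := ∑ i ∈ (range (M + 1)).filter (n ∣ ·), mulOp (c i) * L ^ (i / n)
  set ξ : ℕ → F := fun j => if j ∈ Jset n M then c j else 0
  have hQR : Q = R + theta ξ B (Jset n M) := by
    rw [hQc, ← sum_filter_add_sum_filter_not _ (n ∣ ·)]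
    congr 1
    · exact sum_congr rfl fun i hi => by rw [extBasis, if_pos (mem_filter.1 hi).2]
    · exact sum_congr rfl fun i hi => by
        have hi' : i ∈ Jset n M := hi
        simp [ξ, extBasis, hi', (mem_filter.1 hi).2]
  have hRpoly : R ∈ CPoly d L := sum_mem_CPoly _ c _ fun i _ => hc i
  have hRcent : R ∈ Cent d L := (centralizerOp d L).sum_mem fun i _ =>
    hd.mulOp_mul_mem_Cent ⟨n, mem_OpLE_of_sub_pow_mem hLmon⟩ (hc i) (hd.pow_mem_Cent hLmon _)
  refine ⟨ξ, ⟨fun j => ?_, fun j hj => if_neg hj, ?_⟩, fun hξ0 => hQnp ?_⟩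
  · by_cases hj : j ∈ Jset n M <;> simp [ξ, hj, hc j]
  · rw [eq_sub_of_add_eq' hQR.symm]
    exact (centralizerOp d L).sub_mem hQ hRcent
  · simpa [hQR, hξ0, theta] using hRpoly

lemma IsDeriv.exists_mem_VmSet_level_apply_ne_zero (hd : IsDeriv d) {x : F} (hx : d x ≠ 0)
    (hn : 1 ≤ n) (hnf : L - derOp d ^ n ∈ OpLE d (n - 2))
    (hBmon : ∀ j, ¬ n ∣ j → B j - derOp d ^ j ∈ OpLT d j)
    (hBcomm : ∀ j, ¬ n ∣ j → ⁅L, B j⁆ ∈ OpLT d (n - 1)) (hlev : Level d L M) :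
    1 ≤ M ∧ ¬ n ∣ M ∧ ∃ v ∈ VmSet d L B n M, v M ≠ 0 := by
  have hLmon : L - derOp d ^ n ∈ OpLT d n := OpLE_le_OpLT (by omega) hnf
  obtain ⟨ξ, hξ, hξ0⟩ := hd.exists_ne_zero_mem_VmSet_level hx hn hnf hBmon hBcomm hlev
  obtain ⟨j, hj, hξj, hMj⟩ := hd.exists_le_of_mem_VmSet hx hn hLmon hBmon hlev hξ hξ0
  obtain ⟨hjM, hnj⟩ := mem_Jset.1 hj
  obtain rfl : j = M := le_antisymm hjM hMj
  exact ⟨pos_of_not_dvd hnj, hnj, ξ, hξ, hξj⟩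

end Level

/-- If `M` is the level of `L`, then `F_M` is a single point `{c_M}` and
`V_M` is the line spanned by `(c_M, 1)`.  More generally, for `m` not divisible by `n`,
either `F_m = ∅` or `F_m = {c_m} + V_{m−1}` is an affine space over `V_{m−1}`, and
`V_m = V_{m−1} ⊕ T_m` with `dim T_m ≤ 1`. -/
theorem flag_of_constants {F : Type} [Field F] [CharZero F]
    (d : F →+ F) (hd : IsDeriv d) (L : AddMonoid.End F) (n : ℕ) (hn : 1 ≤ n)
    (hL : MonicOrd d L n)
    (hnf : L - derOp d ^ n ∈ OpLE d (n - 2))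
    (B : ℕ → AddMonoid.End F)
    (hB : ∀ j, B j ∈ OpLE d j ∧ B j - derOp d ^ j ∈ OpLE d (j - 1) ∧
      L * B j - B j * L ∈ OpLE d (n - 2))
    (M : ℕ) (hlev : Level d L M) :
    (∃ c : ℕ → F, FmSet d L B n M = {c}) ∧
    (∀ c : ℕ → F, FmSet d L B n M = {c} →
       VmSet d L B n M =
         {v | ∃ α : F, d α = 0 ∧ v = fun j => if j = M then α else α * c j}) ∧
    (∀ m : ℕ, 1 ≤ m → ¬ (n ∣ m) →
      (FmSet d L B n m = ∅ ∨ ∃ c ∈ FmSet d L B n m,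
         FmSet d L B n m =
           {c' | ∃ v ∈ VmSet d L B n (m - 1), c' = fun j => c j + v j}) ∧
      (VmSet d L B n m = VmSet d L B n (m - 1) ∨
       ∃ t ∈ VmSet d L B n m, t ∉ VmSet d L B n (m - 1) ∧
         ∀ v ∈ VmSet d L B n m, ∃ α : F, d α = 0 ∧
           (fun j => v j - α * t j) ∈ VmSet d L B n (m - 1))) := by
  obtain ⟨x, hx⟩ := exists_ne_zero_of_hasOrd hn hL.1
  have hLop : IsOp d L := ⟨n, hL.1.1⟩
  have hLmon : L - derOp d ^ n ∈ OpLT d n := OpLE_le_OpLT (by omega) hnf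
  have hBmon : ∀ j, ¬ n ∣ j → B j - derOp d ^ j ∈ OpLT d j := fun j hj =>
    OpLE_le_OpLT (by have := pos_of_not_dvd hj; omega) (hB j).2.1
  have hBcomm : ∀ j, ¬ n ∣ j → ⁅L, B j⁆ ∈ OpLT d (n - 1) := fun j hj => by
    have hn1 : n ≠ 1 := by rintro rfl; exact hj (one_dvd j)
    rw [Ring.lie_def]; exact OpLE_le_OpLT (by omega) (hB j).2.2
  have hV := hd.eq_zero_of_mem_VmSet_pred_level (B := B) hx hn hLmon hBmon hlev
  obtain ⟨hM, hnM, v, hv, hvM⟩ :=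
    hd.exists_mem_VmSet_level_apply_ne_zero hx hn hnf hBmon hBcomm hlev
  refine ⟨hd.FmSet_eq_singleton hLop hM hnM hV hv hvM, fun c hc => ?_, fun m hm hnm =>
    ⟨FmSet_eq_empty_or_affine, hd.VmSet_eq_or_exists_complement hLop hm hnm⟩⟩
  exact hd.VmSet_eq_span hLop hM hnM hV (hc.symm ▸ Set.mem_singleton c)
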